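/- arXiv:2401.05228 — 2 statements merged into one kernel-verified Lean document; each statement's English description precedes it below -/
import Mathlib

section
/- Let Γ̃, Γ, Γ' be metrised graphs, let f : Γ̃ → Γ be a finite morphism harmonic of degree d₁ and g : Γ̃ → Γ' a finite morphism harmonic of degree d₂ (with respective local degree functions). Let f^* : H₁(Γ,ℝ) → H₁(Γ̃,ℝ) be the pullback (f^*y)(e) = d_e(f)·y(f(e)) and g_* : H₁(Γ̃,ℝ) → H₁(Γ',ℝ) the pushforward. Then for every γ ∈ H₁(Γ,ℝ) one has ⟨g_*(f^*γ), g_*(f^*γ)⟩_{Γ'} ≤ d₁·d₂·⟨γ, γ⟩_Γ; that is, the composite g_* ∘ f^* has operator norm at most √(d₁·d₂) with respect to the intersection length pairings. -/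
open Finset

/-- A metrised graph: finite sets of vertices and oriented edges, a source map,
a fixed-point-free involution on edges, and a positive length function invariant
under the involution. -/
structure MetrisedGraph (V E : Type) where
  src : E → V
  inv : E → E
  inv_inv : ∀ e, inv (inv e) = e
  inv_ne : ∀ e, inv e ≠ e
  len : E → ℝ
  len_pos : ∀ e, 0 < len e
  len_inv : ∀ e, len (inv e) = len e

/-- A finite morphism of metrised graphs: maps on vertices and edges commuting with
source and inversion, such that each edge has an integer dilation factor
`degE e = len (onE e) / len e > 0`. -/
structure MetrisedGraph.FiniteMorphism {V E V' E' : Type}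
    (G : MetrisedGraph V E) (G' : MetrisedGraph V' E') where
  onV : V → V'
  onE : E → E'
  src_comm : ∀ e, onV (G.src e) = G'.src (onE e)
  inv_comm : ∀ e, onE (G.inv e) = G'.inv (onE e)
  degE : E → ℤ
  degE_pos : ∀ e, 0 < degE e
  degE_spec : ∀ e, G'.len (onE e) = (degE e : ℝ) * G.len e

/-- A 1-cycle on a metrised graph: an antisymmetric real function on oriented edges
with vanishing boundary at every vertex.  These are exactly the elements of H₁(Γ,ℝ). -/
def MetrisedGraph.IsOneCycle {V E : Type} [Fintype E] [DecidableEq V]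
    (G : MetrisedGraph V E) (x : E → ℝ) : Prop :=
  (∀ e, x (G.inv e) = - x e) ∧
  (∀ v : V, ∑ e ∈ univ.filter (fun e => G.src e = v), x e = 0)

/-- The intersection length pairing `⟨x, y⟩ = (1/2) Σ_e len(e)·x(e)·y(e)` on 1-chains. -/
noncomputable def MetrisedGraph.pairing {V E : Type} [Fintype E]
    (G : MetrisedGraph V E) (x y : E → ℝ) : ℝ :=
  (1/2) * ∑ e : E, G.len e * x e * y e

/-- Pushforward of 1-chains along a finite morphism. -/
noncomputable def MetrisedGraph.FiniteMorphism.pushforward {V E V' E' : Type} [Fintype E] [DecidableEq E']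
    {G : MetrisedGraph V E} {G' : MetrisedGraph V' E'}
    (f : G.FiniteMorphism G') (x : E → ℝ) : E' → ℝ :=
  fun e' => ∑ e ∈ univ.filter (fun e => f.onE e = e'), x e

/-- Pullback of 1-chains along a finite morphism: `(f^* y)(e) = d_e(f) · y(f(e))`. -/
noncomputable def MetrisedGraph.FiniteMorphism.pullback {V E V' E' : Type}
    {G : MetrisedGraph V E} {G' : MetrisedGraph V' E'}
    (f : G.FiniteMorphism G') (y : E' → ℝ) : E → ℝ :=
  fun e => (f.degE e : ℝ) * y (f.onE e)

/-- `f` is harmonic with local degrees `d : V → ℤ`: for every vertex `v` and every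
edge `e'` out of `f(v)`, the sum of `d_e(f)` over edges `e` out of `v` with `f(e) = e'`
equals `d v`. -/
def MetrisedGraph.FiniteMorphism.IsHarmonic {V E V' E' : Type}
    [Fintype E] [DecidableEq V] [DecidableEq E']
    {G : MetrisedGraph V E} {G' : MetrisedGraph V' E'}
    (f : G.FiniteMorphism G') (d : V → ℤ) : Prop :=
  ∀ (v : V) (e' : E'), G'.src e' = f.onV v →
    ∑ e ∈ univ.filter (fun e => G.src e = v ∧ f.onE e = e'), f.degE e = d v

/-- `f` is harmonic of degree `n` with local degrees `d`: harmonic, surjective on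
vertices and on edges, and `Σ_{f(v) = v'} d v = n` for every vertex `v'`. -/
def MetrisedGraph.FiniteMorphism.IsHarmonicOfDegree {V E V' E' : Type}
    [Fintype V] [Fintype E] [DecidableEq V] [DecidableEq V'] [DecidableEq E']
    {G : MetrisedGraph V E} {G' : MetrisedGraph V' E'}
    (f : G.FiniteMorphism G') (d : V → ℤ) (n : ℤ) : Prop :=
  f.IsHarmonic d ∧ Function.Surjective f.onV ∧ Function.Surjective f.onE ∧
    ∀ v' : V', ∑ v ∈ univ.filter (fun v => f.onV v = v'), d v = n

/-!
Pulling back along `f` multiplies the pairing by exactly `d₁`: an edge `e` of `Γ̃` over `ε`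
has length `l(ε)/d_e(f)` and carries the value `d_e(f)·γ(ε)`, and harmonicity of degree `d₁`
makes the local degrees over each edge of `Γ` add up to `d₁`. Pushing forward along `g` costs at
most a factor `d₂`: on the fibre over an edge `e'` of `Γ'`, Cauchy–Schwarz with weights
`d_e(g)` gives `l(e')·(Σ x(e))² ≤ (Σ d_e(g))·Σ l(e)·x(e)²`, and again `Σ d_e(g) = d₂`.
-/

namespace MetrisedGraph.FiniteMorphism

variable {V E V' E' : Type} {G : MetrisedGraph V E} {G' : MetrisedGraph V' E'}

def fiberDegree [Fintype E] [DecidableEq E'] (f : G.FiniteMorphism G') (e' : E') : ℤ :=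
  ∑ e ∈ univ.filter (fun e => f.onE e = e'), f.degE e

theorem IsHarmonic.fiberDegree_eq [Fintype V] [Fintype E] [DecidableEq V] [DecidableEq V']
    [DecidableEq E'] {f : G.FiniteMorphism G'} {d : V → ℤ} (hf : f.IsHarmonic d) (e' : E') :
    f.fiberDegree e' = ∑ v ∈ univ.filter (fun v => f.onV v = G'.src e'), d v := by
  rw [fiberDegree, ← sum_fiberwise _ G.src, sum_filter]
  refine sum_congr rfl fun v _ => ?_
  split_ifs with hv
  · rw [filter_filter, ← hf v e' hv.symm]
    simp only [and_comm]
  · refine sum_eq_zero fun e he => absurd ?_ hv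
    simp only [mem_filter, mem_univ, true_and] at he
    rw [← he.2, f.src_comm, he.1]

theorem IsHarmonicOfDegree.fiberDegree_eq [Fintype V] [Fintype E] [DecidableEq V]
    [DecidableEq V'] [DecidableEq E'] {f : G.FiniteMorphism G'} {d : V → ℤ} {n : ℤ}
    (hf : f.IsHarmonicOfDegree d n) (e' : E') : f.fiberDegree e' = n :=
  (hf.1.fiberDegree_eq e').trans (hf.2.2.2 _)

variable [Fintype E] [DecidableEq E'] (f : G.FiniteMorphism G')

theorem pairing_pullback [Fintype E'] {n : ℤ} (hf : ∀ e', f.fiberDegree e' = n)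
    (x y : E' → ℝ) : G.pairing (f.pullback x) (f.pullback y) = n * G'.pairing x y := by
  have hterm : ∀ e, G.len e * f.pullback x e * f.pullback y e
      = f.degE e * (G'.len (f.onE e) * x (f.onE e) * y (f.onE e)) := fun e => by
    rw [pullback, pullback, f.degE_spec]; ring
  have hfiber : ∀ e', ∑ e ∈ univ.filter (fun e => f.onE e = e'),
      f.degE e * (G'.len (f.onE e) * x (f.onE e) * y (f.onE e))
        = n * (G'.len e' * x e' * y e') := fun e' => by
    rw [sum_congr rfl fun e he => by rw [(mem_filter.mp he).2], ← sum_mul, ← hf e', fiberDegree]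
    push_cast; rfl
  simp only [pairing, hterm]
  rw [← sum_fiberwise _ f.onE, sum_congr rfl fun e' _ => hfiber e', ← mul_sum]
  ring

theorem len_mul_pushforward_mul_self_le (x : E → ℝ) (e' : E') :
    G'.len e' * f.pushforward x e' * f.pushforward x e'
      ≤ f.fiberDegree e' *
          ∑ e ∈ univ.filter (fun e => f.onE e = e'), G.len e * x e * x e := by
  set s := univ.filter (fun e => f.onE e = e')
  have hdeg : ∀ e, (0 : ℝ) < f.degE e := fun e => by exact_mod_cast f.degE_pos e
  have cauchy_schwarz :
    (∑ e ∈ s, x e) ^ 2 ≤ (∑ e ∈ s, (f.degE e : ℝ)) * ∑ e ∈ s, x e ^ 2 / f.degE e :=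
    sum_sq_le_sum_mul_sum_of_sq_le_mul s (fun e _ => (hdeg e).le)
      (fun e _ => div_nonneg (sq_nonneg _) (hdeg e).le)
      (fun e _ => (mul_div_cancel₀ _ (hdeg e).ne').ge)
  have hlen : ∀ e ∈ s, G'.len e' * (x e ^ 2 / f.degE e) = G.len e * x e * x e := fun e he => by
    rw [← (mem_filter.mp he).2, f.degE_spec]
    field_simp [(hdeg e).ne']
  calc G'.len e' * f.pushforward x e' * f.pushforward x e'
      = G'.len e' * (∑ e ∈ s, x e) ^ 2 := by
        rw [pushforward]; ring
    _ ≤ G'.len e' * ((∑ e ∈ s, (f.degE e : ℝ)) * ∑ e ∈ s, x e ^ 2 / f.degE e) :=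
        mul_le_mul_of_nonneg_left cauchy_schwarz (G'.len_pos e').le
    _ = f.fiberDegree e' * ∑ e ∈ s, G.len e * x e * x e := by
        rw [mul_left_comm, mul_sum, sum_congr rfl hlen, fiberDegree]; push_cast; rfl

theorem pairing_pushforward_self_le [Fintype E'] {n : ℤ} (hf : ∀ e', f.fiberDegree e' = n)
    (x : E → ℝ) : G'.pairing (f.pushforward x) (f.pushforward x) ≤ n * G.pairing x x := by
  calc G'.pairing (f.pushforward x) (f.pushforward x)
      ≤ 1 / 2 * ∑ e', n *
          ∑ e ∈ univ.filter (fun e => f.onE e = e'), G.len e * x e * x e := by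
        rw [pairing]
        gcongr 1 / 2 * ∑ e', ?_ with e'
        rw [← hf e']
        exact f.len_mul_pushforward_mul_self_le x e'
    _ = n * G.pairing x x := by
        rw [← mul_sum, sum_fiberwise, pairing]; ring

end MetrisedGraph.FiniteMorphism

theorem pushforward_pullback_norm_le_general
    {V₀ E₀ V E V' E' : Type}
    [Fintype V₀] [Fintype E₀] [Fintype E] [Fintype E']
    [DecidableEq V₀] [DecidableEq V] [DecidableEq E]
    [DecidableEq V'] [DecidableEq E']
    (G₀ : MetrisedGraph V₀ E₀) (G : MetrisedGraph V E) (G' : MetrisedGraph V' E')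
    (f : G₀.FiniteMorphism G) (g : G₀.FiniteMorphism G')
    (df dg : V₀ → ℤ) (d₁ d₂ : ℤ)
    (hf : f.IsHarmonicOfDegree df d₁) (hg : g.IsHarmonicOfDegree dg d₂) :
    ∀ γ : E → ℝ, G.IsOneCycle γ →
      G'.pairing (g.pushforward (f.pullback γ)) (g.pushforward (f.pullback γ)) ≤
        (d₁ : ℝ) * (d₂ : ℝ) * G.pairing γ γ := by
  intro γ _
  calc G'.pairing (g.pushforward (f.pullback γ)) (g.pushforward (f.pullback γ))
      ≤ d₂ * G₀.pairing (f.pullback γ) (f.pullback γ) :=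
        g.pairing_pushforward_self_le hg.fiberDegree_eq _
    _ = d₁ * d₂ * G.pairing γ γ := by
        rw [f.pairing_pullback hf.fiberDegree_eq]; ring

/-- Core of the boundedness theorem for correspondences: if `f : Γ̃ → Γ` is harmonic of
degree `d₁` and `g : Γ̃ → Γ'` is harmonic of degree `d₂`, then for every
`γ ∈ H₁(Γ,ℝ)` one has `⟨g_*(f^*γ), g_*(f^*γ)⟩ ≤ d₁·d₂·⟨γ, γ⟩`, i.e. the composite
`g_* ∘ f^*` has operator norm at most `√(d₁·d₂)`. -/
theorem pushforward_pullback_norm_le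
    {V₀ E₀ V E V' E' : Type}
    [Fintype V₀] [Fintype E₀] [Fintype V] [Fintype E] [Fintype V'] [Fintype E']
    [DecidableEq V₀] [DecidableEq E₀] [DecidableEq V] [DecidableEq E]
    [DecidableEq V'] [DecidableEq E']
    (G₀ : MetrisedGraph V₀ E₀) (G : MetrisedGraph V E) (G' : MetrisedGraph V' E')
    (f : G₀.FiniteMorphism G) (g : G₀.FiniteMorphism G')
    (df dg : V₀ → ℤ) (d₁ d₂ : ℤ)
    (hf : f.IsHarmonicOfDegree df d₁) (hg : g.IsHarmonicOfDegree dg d₂) :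
    ∀ γ : E → ℝ, G.IsOneCycle γ →
      G'.pairing (g.pushforward (f.pullback γ)) (g.pushforward (f.pullback γ)) ≤
        (d₁ : ℝ) * (d₂ : ℝ) * G.pairing γ γ :=
  pushforward_pullback_norm_le_general G₀ G G' f g df dg d₁ d₂ hf hg
end

section
/- Let K be a field equipped with a valuation v : K → ℝ ∪ {∞}, let v₂ ≤ v₁ be real numbers, and let a, ã : ℤ → K be Laurent coefficient sequences on the closed annulus with parameters (v₁, v₂). Let B₁, B₂ be real numbers with v(a_i − ã_i) + v_k·i ≥ B_k for all i ∈ ℤ and k ∈ {1,2}. Suppose ã admits a decomposition (c, d, g̃), and suppose that v(c) + v_k·d < B_k for k = 1, 2. Then a admits a decomposition (c, d, g) with the same c and d, where g satisfies v(g_i − g̃_i) + v_k·i ≥ B_k − v(c) − v_k·d for all i ∈ ℤ and k ∈ {1,2}. -/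
/-- A (rank-one) valuation on a field `K`, valued in `ℝ ∪ {∞}`:
`v x = ∞ ↔ x = 0`, `v (xy) = v x + v y`, and `v (x+y) ≥ min (v x) (v y)`. -/
def IsValuation {K : Type*} [Field K] (v : K → WithTop ℝ) : Prop :=
  (∀ x : K, v x = ⊤ ↔ x = 0) ∧
  (∀ x y : K, v (x * y) = v x + v y) ∧
  (∀ x y : K, min (v x) (v y) ≤ v (x + y))

/-- `a : ℤ → K` is the Laurent coefficient sequence of a rigid analytic function on the
closed annulus with parameters `(v₁, v₂)`: `v(aᵢ) + v₁·i → ∞` as `i → −∞` and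
`v(aᵢ) + v₂·i → ∞` as `i → +∞`. -/
def IsLaurentSeq {K : Type*} [Field K] (v : K → WithTop ℝ) (v₁ v₂ : ℝ) (a : ℤ → K) : Prop :=
  (∀ B : ℝ, ∃ N : ℤ, ∀ i : ℤ, i ≤ N → (B : WithTop ℝ) < v (a i) + ((v₁ * i : ℝ) : WithTop ℝ)) ∧
  (∀ B : ℝ, ∃ N : ℤ, ∀ i : ℤ, N ≤ i → (B : WithTop ℝ) < v (a i) + ((v₂ * i : ℝ) : WithTop ℝ))

/-- A decomposition `(c, d, g)` of a Laurent coefficient sequence `a`, expressing the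
factorisation `h(t) = c·t^d·(1 + g(t))` where `g` has positive valuation at the Gauss
points of both bounding discs. -/
def IsDecomposition {K : Type*} [Field K] (v : K → WithTop ℝ) (v₁ v₂ : ℝ)
    (a : ℤ → K) (c : K) (d : ℤ) (g : ℤ → K) : Prop :=
  c ≠ 0 ∧ IsLaurentSeq v v₁ v₂ g ∧
  (∀ i : ℤ, (0 : WithTop ℝ) < v (g i) + ((v₁ * i : ℝ) : WithTop ℝ)) ∧
  (∀ i : ℤ, (0 : WithTop ℝ) < v (g i) + ((v₂ * i : ℝ) : WithTop ℝ)) ∧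
  (∀ i : ℤ, i ≠ d → a i = c * g (i - d)) ∧
  a d = c * (1 + g 0)

/-!
Dividing by `c t^d` turns `a` into `1 + g`, where `g i = a (i + d) / c - δ_{i0}`; this `g` is
forced, and `g - g̃` is `(a - ã)` shifted by `d` and divided by `c`, so it inherits the precision
of `ã` lowered by `v(c) + v_k d`. As that precision is positive, the ultrametric inequality
transfers the positivity of `g̃` to `g`.
-/

namespace IsValuation

variable {K : Type*} [Field K] {v : K → WithTop ℝ}

theorem map_one (hv : IsValuation v) : v 1 = 0 := by
  obtain ⟨t, ht⟩ := WithTop.ne_top_iff_exists.1 (mt (hv.1 1).1 one_ne_zero)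
  have h := hv.2.1 1 1
  rw [mul_one, ← ht, ← WithTop.coe_add, WithTop.coe_inj] at h
  rw [← ht, show t = 0 by linarith, WithTop.coe_zero]

theorem map_inv_of_eq (hv : IsValuation v) {c : K} {vc : ℝ} (hc : v c = vc) :
    v c⁻¹ = ((-vc : ℝ) : WithTop ℝ) := by
  have hc0 : c ≠ 0 := fun h => WithTop.coe_ne_top (hc ▸ (hv.1 c).2 h)
  obtain ⟨t, ht⟩ := WithTop.ne_top_iff_exists.1 (mt (hv.1 c⁻¹).1 (inv_ne_zero hc0))
  have h := hv.2.1 c c⁻¹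
  rw [mul_inv_cancel₀ hc0, hv.map_one, hc, ← ht, ← WithTop.coe_add, ← WithTop.coe_zero,
    WithTop.coe_inj] at h
  rw [← ht, WithTop.coe_inj]
  linarith

theorem map_div_add_weight (hv : IsValuation v) {c : K} {vc : ℝ} (hc : v c = vc) (x : K)
    (w : ℝ) (i d : ℤ) :
    v (x / c) + ((w * i : ℝ) : WithTop ℝ) + ((vc + w * d : ℝ) : WithTop ℝ) =
      v x + ((w * (i + d : ℤ) : ℝ) : WithTop ℝ) := by
  rw [div_eq_mul_inv, hv.2.1, hv.map_inv_of_eq hc, add_assoc, add_assoc, ← WithTop.coe_add,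
    ← WithTop.coe_add]
  congr 2
  push_cast
  ring

theorem coe_le_map_div_add_weight (hv : IsValuation v) {c : K} {vc : ℝ} (hc : v c = vc)
    {x : K} {w B : ℝ} {i d : ℤ}
    (h : (B : WithTop ℝ) ≤ v x + ((w * (i + d : ℤ) : ℝ) : WithTop ℝ)) :
    ((B - vc - w * d : ℝ) : WithTop ℝ) ≤ v (x / c) + ((w * i : ℝ) : WithTop ℝ) := by
  rw [← hv.map_div_add_weight hc, show B = B - vc - w * d + (vc + w * d) by ring,
    WithTop.coe_add] at h
  exact (WithTop.add_le_add_iff_right WithTop.coe_ne_top).1 h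

theorem coe_lt_map_div_add_weight (hv : IsValuation v) {c : K} {vc : ℝ} (hc : v c = vc)
    {x : K} {w B : ℝ} {i d : ℤ}
    (h : (B : WithTop ℝ) < v x + ((w * (i + d : ℤ) : ℝ) : WithTop ℝ)) :
    ((B - vc - w * d : ℝ) : WithTop ℝ) < v (x / c) + ((w * i : ℝ) : WithTop ℝ) := by
  rw [← hv.map_div_add_weight hc, show B = B - vc - w * d + (vc + w * d) by ring,
    WithTop.coe_add] at h
  exact (WithTop.add_lt_add_iff_right WithTop.coe_ne_top).1 h

theorem lt_map_add_of_lt_map_sub (hv : IsValuation v) {x y : K} {B r : WithTop ℝ}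
    (hy : B < v y + r) (hxy : B < v (x - y) + r) : B < v x + r := by
  have h := add_le_add_left (hv.2.2 y (x - y)) r
  rw [add_sub_cancel, ← min_add_add_right] at h
  exact (lt_min hy hxy).trans_le h

end IsValuation

section DecompositionTail

variable {K : Type*} [Field K]

def decompositionTail (a : ℤ → K) (c : K) (d i : ℤ) : K :=
  a (i + d) / c - if i = 0 then 1 else 0

theorem decompositionTail_of_ne_zero (a : ℤ → K) (c : K) (d : ℤ) {i : ℤ} (hi : i ≠ 0) :
    decompositionTail a c d i = a (i + d) / c := by
  rw [decompositionTail, if_neg hi, sub_zero]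

theorem decompositionTail_sub (a b : ℤ → K) (c : K) (d i : ℤ) :
    decompositionTail a c d i - decompositionTail b c d i = (a (i + d) - b (i + d)) / c := by
  rw [decompositionTail, decompositionTail, sub_sub_sub_cancel_right, sub_div]

theorem mul_decompositionTail_sub {c : K} (hc : c ≠ 0) (a : ℤ → K) {d i : ℤ} (hi : i ≠ d) :
    c * decompositionTail a c d (i - d) = a i := by
  rw [decompositionTail_of_ne_zero a c d (sub_ne_zero.2 hi), sub_add_cancel,
    mul_div_cancel₀ _ hc]

theorem mul_one_add_decompositionTail_zero {c : K} (hc : c ≠ 0) (a : ℤ → K) (d : ℤ) :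
    c * (1 + decompositionTail a c d 0) = a d := by
  rw [decompositionTail, if_pos rfl, add_sub_cancel, zero_add, mul_div_cancel₀ _ hc]

theorem IsDecomposition.eq_decompositionTail {v : K → WithTop ℝ} {v₁ v₂ : ℝ} {a : ℤ → K}
    {c : K} {d : ℤ} {g : ℤ → K} (h : IsDecomposition v v₁ v₂ a c d g) :
    g = decompositionTail a c d := by
  obtain ⟨hc, -, -, -, hshift, hd⟩ := h
  funext i
  by_cases hi : i = 0
  · rw [decompositionTail, if_pos hi, hi, zero_add, hd, mul_div_cancel_left₀ _ hc,
      add_sub_cancel_left]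
  · rw [decompositionTail_of_ne_zero a c d hi, hshift (i + d) (by omega), add_sub_cancel_right,
      mul_div_cancel_left₀ _ hc]

variable {v : K → WithTop ℝ} {c : K} {vc : ℝ}

theorem isLaurentSeq_decompositionTail (hv : IsValuation v) (hc : v c = vc) {v₁ v₂ : ℝ}
    {a : ℤ → K} (ha : IsLaurentSeq v v₁ v₂ a) (d : ℤ) :
    IsLaurentSeq v v₁ v₂ (decompositionTail a c d) := by
  constructor
  · intro B
    obtain ⟨N, hN⟩ := ha.1 (B + vc + v₁ * d)
    refine ⟨min (N - d) (-1), fun i hi => ?_⟩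
    have h := hv.coe_lt_map_div_add_weight hc (hN (i + d) (by omega))
    rwa [show B + vc + v₁ * d - vc - v₁ * d = B by ring,
      ← decompositionTail_of_ne_zero a c d (by omega : i ≠ 0)] at h
  · intro B
    obtain ⟨N, hN⟩ := ha.2 (B + vc + v₂ * d)
    refine ⟨max (N - d) 1, fun i hi => ?_⟩
    have h := hv.coe_lt_map_div_add_weight hc (hN (i + d) (by omega))
    rwa [show B + vc + v₂ * d - vc - v₂ * d = B by ring,
      ← decompositionTail_of_ne_zero a c d (by omega : i ≠ 0)] at h

theorem coe_le_map_decompositionTail_sub (hv : IsValuation v) (hc : v c = vc) {a b : ℤ → K}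
    {w B : ℝ} (hB : ∀ i : ℤ, (B : WithTop ℝ) ≤ v (a i - b i) + ((w * i : ℝ) : WithTop ℝ))
    (d i : ℤ) :
    ((B - vc - w * d : ℝ) : WithTop ℝ) ≤
      v (decompositionTail a c d i - decompositionTail b c d i) + ((w * i : ℝ) : WithTop ℝ) := by
  rw [decompositionTail_sub]
  exact hv.coe_le_map_div_add_weight hc (hB (i + d))

end DecompositionTail

theorem decomposition_of_approximation_general
    {K : Type*} [Field K] (v : K → WithTop ℝ) (hv : IsValuation v)
    (v₁ v₂ : ℝ)
    (a atil : ℤ → K)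
    (ha : IsLaurentSeq v v₁ v₂ a)
    (B₁ B₂ : ℝ)
    (hB₁ : ∀ i : ℤ,
      (B₁ : WithTop ℝ) ≤ v (a i - atil i) + ((v₁ * i : ℝ) : WithTop ℝ))
    (hB₂ : ∀ i : ℤ,
      (B₂ : WithTop ℝ) ≤ v (a i - atil i) + ((v₂ * i : ℝ) : WithTop ℝ))
    (c : K) (d : ℤ) (gtil : ℤ → K)
    (hdec : IsDecomposition v v₁ v₂ atil c d gtil)
    (vc : ℝ) (hvc : v c = (vc : WithTop ℝ))
    (h₁ : vc + v₁ * d < B₁) (h₂ : vc + v₂ * d < B₂) :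
    ∃ g : ℤ → K, IsDecomposition v v₁ v₂ a c d g ∧
      (∀ i : ℤ, ((B₁ - vc - v₁ * d : ℝ) : WithTop ℝ) ≤
        v (g i - gtil i) + ((v₁ * i : ℝ) : WithTop ℝ)) ∧
      (∀ i : ℤ, ((B₂ - vc - v₂ * d : ℝ) : WithTop ℝ) ≤
        v (g i - gtil i) + ((v₂ * i : ℝ) : WithTop ℝ)) := by
  obtain rfl := hdec.eq_decompositionTail
  obtain ⟨hc, -, hg₁, hg₂, -, -⟩ := hdec
  have hd₁ := coe_le_map_decompositionTail_sub hv hvc hB₁ d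
  have hd₂ := coe_le_map_decompositionTail_sub hv hvc hB₂ d
  refine ⟨decompositionTail a c d, ⟨hc, isLaurentSeq_decompositionTail hv hvc ha d,
    fun i => ?_, fun i => ?_, fun i hi => (mul_decompositionTail_sub hc a hi).symm,
    (mul_one_add_decompositionTail_zero hc a d).symm⟩, hd₁, hd₂⟩
  · exact hv.lt_map_add_of_lt_map_sub (hg₁ i)
      ((WithTop.coe_pos.2 (by linarith)).trans_le (hd₁ i))
  · exact hv.lt_map_add_of_lt_map_sub (hg₂ i)
      ((WithTop.coe_pos.2 (by linarith)).trans_le (hd₂ i))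

/-- Decomposition of an approximated unit: if `ã` represents `a` to precision
`(B₁, B₂)`, `ã` has a decomposition `(c, d, g̃)`, and `v(c) + v_k·d < B_k` for
`k = 1, 2`, then `a` has a decomposition `(c, d, g)` with the same `c` and `d`, where
`g` is represented by `g̃` to precision `(B₁ − v(c) − v₁·d, B₂ − v(c) − v₂·d)`. -/
theorem decomposition_of_approximation
    {K : Type*} [Field K] (v : K → WithTop ℝ) (hv : IsValuation v)
    (v₁ v₂ : ℝ) (h12 : v₂ ≤ v₁)
    (a atil : ℤ → K)
    (ha : IsLaurentSeq v v₁ v₂ a) (hatil : IsLaurentSeq v v₁ v₂ atil)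
    (B₁ B₂ : ℝ)
    (hB₁ : ∀ i : ℤ,
      (B₁ : WithTop ℝ) ≤ v (a i - atil i) + ((v₁ * i : ℝ) : WithTop ℝ))
    (hB₂ : ∀ i : ℤ,
      (B₂ : WithTop ℝ) ≤ v (a i - atil i) + ((v₂ * i : ℝ) : WithTop ℝ))
    (c : K) (d : ℤ) (gtil : ℤ → K)
    (hdec : IsDecomposition v v₁ v₂ atil c d gtil)
    (vc : ℝ) (hvc : v c = (vc : WithTop ℝ))
    (h₁ : vc + v₁ * d < B₁) (h₂ : vc + v₂ * d < B₂) :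
    ∃ g : ℤ → K, IsDecomposition v v₁ v₂ a c d g ∧
      (∀ i : ℤ, ((B₁ - vc - v₁ * d : ℝ) : WithTop ℝ) ≤
        v (g i - gtil i) + ((v₁ * i : ℝ) : WithTop ℝ)) ∧
      (∀ i : ℤ, ((B₂ - vc - v₂ * d : ℝ) : WithTop ℝ) ≤
        v (g i - gtil i) + ((v₂ * i : ℝ) : WithTop ℝ)) :=
  decomposition_of_approximation_general v hv v₁ v₂ a atil ha B₁ B₂ hB₁ hB₂ c d gtil hdec vc hvc h₁
    h₂
end
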